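/- Under Hypothesis (H), set f = P/Q. For every natural number i there exist g_i in k(x,y) and a_i in k(x)[y] with deg_y(a_i) < d_y* such that D_x^i(f) = D_y(g_i) + a_i/Q*. Moreover, for any such choice, the d_y* + 1 rational functions r_0 = a_0/Q*, r_1 = a_1/Q*, …, r_{d_y*} = a_{d_y*}/Q* are linearly dependent over k(x). -/

import Mathlib

open Polynomial

noncomputable section

/-- A map is a derivation: it is additive and satisfies the Leibniz rule. -/
def IsDeriv {F : Type*} [CommRing F] (D : F → F) : Prop :=
  (∀ a b, D (a + b) = D a + D b) ∧ ∀ a b, D (a * b) = a * D b + b * D a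

/-- Degree in `x` of an element of `k[x][y]` (inner variable `x`, outer variable `y`). -/
def degX {k : Type*} [Field k] (Q : Polynomial (Polynomial k)) : ℕ :=
  Q.support.sup fun i => (Q.coeff i).natDegree

/-- Partial derivative with respect to `x` on `k[x][y]`. -/
def derivX {k : Type*} [Field k] (Q : Polynomial (Polynomial k)) : Polynomial (Polynomial k) :=
  Q.sum fun i a => Polynomial.C (Polynomial.derivative a) * Polynomial.X ^ i

/-- The embedding `k[x][y] → k(x)(y)`. -/
def toF {k : Type*} [Field k] : Polynomial (Polynomial k) →+* RatFunc (RatFunc k) :=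
  (algebraMap (Polynomial (RatFunc k)) (RatFunc (RatFunc k))).comp
    (Polynomial.mapRingHom (algebraMap (Polynomial k) (RatFunc k)))

/-- The embedding `k(x) → k(x)(y)`. -/
def ratToF {k : Type*} [Field k] : RatFunc k →+* RatFunc (RatFunc k) :=
  (algebraMap (Polynomial (RatFunc k)) (RatFunc (RatFunc k))).comp
    (Polynomial.C : RatFunc k →+* Polynomial (RatFunc k))

/-- The embedding `k(x)[y] → k(x)(y)`. -/
def kyToF {k : Type*} [Field k] : Polynomial (RatFunc k) →+* RatFunc (RatFunc k) :=
  algebraMap (Polynomial (RatFunc k)) (RatFunc (RatFunc k))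

/-- The embedding `k[x][y] → k(x)[y]`. -/
def toKy {k : Type*} [Field k] : Polynomial (Polynomial k) →+* Polynomial (RatFunc k) :=
  Polynomial.mapRingHom (algebraMap (Polynomial k) (RatFunc k))

/-- The embedding `k[y] → k[x][y]` (a polynomial in `y` viewed in `k[x][y]`). -/
def yToXY {k : Type*} [Field k] : Polynomial k →+* Polynomial (Polynomial k) :=
  Polynomial.mapRingHom (Polynomial.C : k →+* Polynomial k)

/-- The Hermite matrix associated with a factorisation `Q = Qs * Qneg`, with respect to the
monomial bases: its columns are the coefficient vectors (in `y`, coefficients in `k[x]`) of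
`Qs * D_y(y^j) - E * y^j` for `j < dm` (where `E = Qs * D_y(Qneg) / Qneg`) and of
`Qneg * y^j` for `j < dy - dm`. -/
def hermiteMat {k : Type*} [Field k] (Qs Qneg E : Polynomial (Polynomial k)) (dy dm : ℕ) :
    Matrix (Fin dy) (Fin dy) (Polynomial k) :=
  Matrix.of fun i j =>
    if (j : ℕ) < dm then
      (Qs * Polynomial.derivative (Polynomial.X ^ (j : ℕ)) - E * Polynomial.X ^ (j : ℕ)).coeff i
    else
      (Qneg * Polynomial.X ^ ((j : ℕ) - dm)).coeff i

/-! The iterated derivatives of `P/Q` have the form `N/Q^e`. Since `Q` divides a unit times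
`(Q*)^m` in `k(x)[y]`, they can be rewritten as `A/(Q*)^(m e)`. Being primitive and squarefree
over `k[x]`, `Q*` stays squarefree over `k(x)`, hence (characteristic zero) coprime to its
`y`-derivative, and Hermite reduction lowers the pole order down to `D_y g + a/Q*` with
`deg_y a < d_y*`. The `d_y* + 1` numerators then live in the `d_y*`-dimensional `k(x)`-space of
polynomials of degree `< d_y*`, so they are linearly dependent. -/

open Finset

namespace IsDeriv

variable {F : Type*} [Field F] {D : F → F}

theorem map_zero (hD : IsDeriv D) : D 0 = 0 := by
  simpa using hD.1 0 0

theorem map_neg (hD : IsDeriv D) (x : F) : D (-x) = -D x := by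
  linear_combination -(by simpa [hD.map_zero] using hD.1 x (-x) : 0 = D x + D (-x))

theorem map_div (hD : IsDeriv D) (x : F) {y : F} (hy : y ≠ 0) :
    D (x / y) = (D x * y - x * D y) / y ^ 2 := by
  have h := hD.2 y (x / y)
  rw [mul_div_cancel₀ x hy] at h
  rw [eq_div_iff (pow_ne_zero 2 hy), h]
  field_simp
  ring

theorem exists_iterate_div_eq {R : Type*} [CommRing R] (hD : IsDeriv D) (φ : R →+* F)
    (δ : R → R) (hδ : ∀ A, D (φ A) = φ (δ A)) {Q : R} (hQ : φ Q ≠ 0) (P : R) (i : ℕ) :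
    ∃ (N : R) (e : ℕ), D^[i] (φ P / φ Q) = φ N / φ Q ^ e := by
  induction i with
  | zero => exact ⟨P, 1, by simp⟩
  | succ i ih =>
    obtain ⟨N, e, hN⟩ := ih
    refine ⟨δ N * Q ^ e - N * δ (Q ^ e), 2 * e, ?_⟩
    rw [Function.iterate_succ_apply', hN, ← map_pow,
      hD.map_div _ (by simpa using pow_ne_zero e hQ), hδ, hδ, pow_mul', map_pow]
    simp

end IsDeriv

theorem Polynomial.exists_derivative_eq {K : Type*} [Field K] [CharZero K] (A : K[X]) :
    ∃ B : K[X], derivative B = A := by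
  induction A using Polynomial.induction_on' with
  | add p q hp hq =>
    obtain ⟨B₁, rfl⟩ := hp
    obtain ⟨B₂, rfl⟩ := hq
    exact ⟨B₁ + B₂, derivative_add⟩
  | monomial n a =>
    refine ⟨monomial (n + 1) (a / (n + 1)), ?_⟩
    rw [derivative_monomial, Nat.add_sub_cancel]
    congr 1
    field_simp
    push_cast
    ring

section HermiteReduction

variable {K F : Type*} [Field K] [CharZero K] [Field F] {D : F → F} (ι : K[X] →+* F)

theorem exists_div_eq_deriv_add_div_of_degree_lt
    (hDι : ∀ A, D (ι A) = ι (derivative A)) {S : K[X]} (hS : ι S ≠ 0) (A : K[X]) :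
    ∃ (g : F) (a : K[X]), a.degree < S.natDegree ∧ ι A / ι S = D g + ι a / ι S := by
  have hS0 : S ≠ 0 := by rintro rfl; simp at hS
  obtain ⟨B, hB⟩ := exists_derivative_eq (A / S)
  refine ⟨ι B, A % S, degree_eq_natDegree hS0 ▸ degree_mod_lt A hS0, ?_⟩
  rw [hDι, hB, ← mul_div_cancel_left₀ (ι (A / S)) hS, ← add_div, ← map_mul, ← map_add,
    EuclideanDomain.div_add_mod]

theorem exists_div_pow_succ_eq_deriv_add_div_pow (hD : IsDeriv D)
    (hDι : ∀ A, D (ι A) = ι (derivative A)) {S : K[X]} (hS : IsCoprime S (derivative S))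
    (hS0 : ι S ≠ 0) (n : ℕ) (A : K[X]) :
    ∃ (g : F) (A' : K[X]), ι A / ι S ^ (n + 2) = D g + ι A' / ι S ^ (n + 1) := by
  obtain ⟨u, v, huv⟩ := hS
  -- `A = A u S + (n + 1) w S'`, and by the quotient rule
  -- `(n + 1) w S' / S ^ (n + 2) = w' / S ^ (n + 1) - D (w / S ^ (n + 1))`.
  set w := C ((n : K) + 1)⁻¹ * (A * v)
  have hA : ι A = ι (A * u) * ι S + (n + 1) * ι w * ι (derivative S) := by
    have hn : ((n : K) + 1) ≠ 0 := Nat.cast_add_one_ne_zero n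
    have : A = A * u * S + (n + 1 : K[X]) * w * derivative S := by
      have hc : C ((n : K) + 1) * C ((n : K) + 1)⁻¹ = 1 := by
        rw [← C_mul, mul_inv_cancel₀ hn, C_1]
      rw [← C_eq_natCast, ← C_1, ← C_add]
      linear_combination (-A) * huv - A * v * derivative S * hc
    simpa only [map_add, map_mul, map_natCast, map_one] using congrArg ι this
  have hDw : D (ι w / ι S ^ (n + 1)) =
      ι (derivative w) / ι S ^ (n + 1) - (n + 1) * ι w * ι (derivative S) / ι S ^ (n + 2) := by
    rw [hD.map_div _ (pow_ne_zero _ hS0), hDι, ← map_pow, hDι, derivative_pow,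
      Nat.add_sub_cancel, C_eq_natCast]
    simp only [map_mul, map_pow, map_natCast]
    push_cast
    field_simp
    ring
  refine ⟨-(ι w / ι S ^ (n + 1)), A * u + derivative w, ?_⟩
  rw [hD.map_neg, hDw, hA, map_add]
  field_simp
  ring

theorem exists_div_pow_eq_deriv_add_div (hD : IsDeriv D)
    (hDι : ∀ A, D (ι A) = ι (derivative A)) {S : K[X]} (hS : IsCoprime S (derivative S))
    (hS0 : ι S ≠ 0) (e : ℕ) (A : K[X]) :
    ∃ (g : F) (a : K[X]), a.degree < S.natDegree ∧ ι A / ι S ^ e = D g + ι a / ι S := by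
  have key : ∀ n A, ∃ (g : F) (a : K[X]), a.degree < S.natDegree ∧
      ι A / ι S ^ (n + 1) = D g + ι a / ι S := by
    intro n
    induction n with
    | zero => simpa using exists_div_eq_deriv_add_div_of_degree_lt ι hDι hS0
    | succ n ih =>
      intro A
      obtain ⟨g₁, A', hA'⟩ := exists_div_pow_succ_eq_deriv_add_div_pow ι hD hDι hS hS0 n A
      obtain ⟨g₂, a, ha, hg₂⟩ := ih A'
      exact ⟨g₁ + g₂, a, ha, by rw [hA', hg₂, hD.1, add_assoc]⟩
  obtain ⟨g, a, ha, h⟩ := key e (A * S)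
  refine ⟨g, a, ha, ?_⟩
  rwa [map_mul, pow_succ, mul_div_mul_right _ _ hS0] at h

end HermiteReduction

theorem Finset.prod_range_pow_succ_dvd_prod_pow {M : Type*} [CommMonoid M] (f : ℕ → M)
    (m : ℕ) :
    ∏ i ∈ range m, f i ^ (i + 1) ∣ (∏ i ∈ range m, f i) ^ m := by
  rw [← prod_pow]
  exact prod_dvd_prod_of_dvd _ _ fun i hi => pow_dvd_pow _ (mem_range.mp hi)

namespace Polynomial

theorem exists_sum_smul_eq_zero_of_degree_lt {K : Type*} [Field K] {n : ℕ}
    (a : Fin (n + 1) → K[X]) (ha : ∀ i, (a i).degree < n) :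
    ∃ η : Fin (n + 1) → K, (∃ i, η i ≠ 0) ∧ ∑ i, η i • a i = 0 := by
  let v : Fin (n + 1) → degreeLT K n := fun i => ⟨a i, mem_degreeLT.mpr (ha i)⟩
  have hv : ¬ LinearIndependent K v := fun h => by
    have := h.fintype_card_le_finrank
    rw [(degreeLTEquiv K n).finrank_eq, Module.finrank_fin_fun, Fintype.card_fin] at this
    omega
  obtain ⟨η, hη, i, hi⟩ := Fintype.not_linearIndependent_iff.mp hv
  exact ⟨η, ⟨i, hi⟩, by simpa [v] using congrArg Subtype.val hη⟩

theorem map_C_mul_prod_pow_succ_dvd {R S : Type*} [CommRing R] [CommRing S] (φ : R →+* S) {q : R}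
    (hq : IsUnit (φ q)) (f : ℕ → R[X]) (m : ℕ) :
    (C q * ∏ i ∈ range m, f i ^ (i + 1)).map φ ∣ ((∏ i ∈ range m, f i).map φ) ^ m := by
  rw [Polynomial.map_mul, map_C, (isUnit_C.mpr hq).mul_left_dvd, ← Polynomial.map_pow]
  exact Polynomial.map_dvd φ (prod_range_pow_succ_dvd_prod_pow f m)

variable {R : Type*} [CommRing R] [NormalizedGCDMonoid R]

theorem isPrimitive_prod {ι : Type*} {s : Finset ι} {f : ι → R[X]}
    (hf : ∀ i ∈ s, (f i).IsPrimitive) : (∏ i ∈ s, f i).IsPrimitive :=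
  Finset.prod_induction f IsPrimitive (fun _ _ => IsPrimitive.mul) isPrimitive_one hf

variable [IsDomain R] {K : Type*} [Field K] [Algebra R K] [IsFractionRing R K]

theorem exists_isPrimitive_associated_map {p : K[X]} (hp : p ≠ 0) :
    ∃ q : R[X], q.IsPrimitive ∧ Associated (q.map (algebraMap R K)) p := by
  obtain ⟨b, hb, hbp⟩ := IsLocalization.integerNormalization_spec (nonZeroDivisors R) p
  set N := IsLocalization.integerNormalization (nonZeroDivisors R) p
  have hN : N ≠ 0 := by
    rwa [Ne, ← IsFractionRing.integerNormalization_eq_zero_iff (A := R)] at hp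
  have hunit : ∀ r : R, r ≠ 0 → IsUnit (C (algebraMap R K r)) := fun r hr =>
    isUnit_C.mpr (IsUnit.mk0 _ ((map_ne_zero_iff _ (IsFractionRing.injective R K)).mpr hr))
  refine ⟨N.primPart, N.isPrimitive_primPart, ?_⟩
  have h : C (algebraMap R K N.content) * N.primPart.map (algebraMap R K) =
      C (algebraMap R K b) * p := by
    rw [← map_C, ← Polynomial.map_mul, ← N.eq_C_content_mul_primPart, hbp, Algebra.smul_def,
      algebraMap_apply]
  refine (associated_isUnit_mul_left_iff (hunit _ (mt content_eq_zero_iff.mp hN))).mp ?_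
  rw [h]
  exact associated_unit_mul_left _ _ (hunit b (nonZeroDivisors.ne_zero hb))

theorem IsPrimitive.squarefree_map {f : R[X]} (hf : f.IsPrimitive) (hsq : Squarefree f) :
    Squarefree (f.map (algebraMap R K)) := by
  intro d hd
  obtain rfl | hd0 := eq_or_ne d 0
  · rw [zero_mul, zero_dvd_iff, Polynomial.map_eq_zero_iff (IsFractionRing.injective R K)] at hd
    exact absurd hd hf.ne_zero
  obtain ⟨q, hq, hqd⟩ := exists_isPrimitive_associated_map (R := R) hd0
  have hqq : q * q ∣ f := (hq.mul hq).dvd_of_fraction_map_dvd_fraction_map (K := K)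
    (by rw [Polynomial.map_mul]; exact (hqd.mul_mul hqd).dvd.trans hd)
  exact hqd.isUnit (hq.isUnit_iff_isUnit_map.mp (hsq q hqq))

theorem separable_map_prod [PerfectField K] {ι : Type*} {s : Finset ι} {f : ι → R[X]}
    (hprim : ∀ i ∈ s, (f i).IsPrimitive) (hsqf : ∀ i ∈ s, Squarefree (f i))
    (hcop : (s : Set ι).Pairwise fun i j => IsRelPrime (f i) (f j)) :
    ((∏ i ∈ s, f i).map (algebraMap R K)).Separable :=
  PerfectField.separable_iff_squarefree.mpr
    ((isPrimitive_prod hprim).squarefree_map (squarefree_prod_of_pairwise_isCoprime hcop hsqf))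

end Polynomial

theorem div_pow_eq_mul_pow_div_pow_of_mul_eq_pow {F : Type*} [Field F] {b t s : F} {m : ℕ}
    (h : b * t = s ^ m) (hs : s ≠ 0) (x : F) (e : ℕ) : x / b ^ e = x * t ^ e / s ^ (m * e) := by
  have ht : t ≠ 0 := right_ne_zero_of_mul (h ▸ pow_ne_zero m hs)
  rw [pow_mul, ← h, mul_pow, mul_div_mul_right _ _ (pow_ne_zero e ht)]

theorem toF_injective {k : Type*} [Field k] : Function.Injective (toF (k := k)) :=
  fun _ _ h => map_injective _ (IsFractionRing.injective (Polynomial k) (RatFunc k))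
    (IsFractionRing.injective (RatFunc k)[X] (RatFunc (RatFunc k)) h)

theorem exists_sum_ratToF_mul_div_eq_zero {k : Type*} [Field k] {n : ℕ}
    (a : Fin (n + 1) → (RatFunc k)[X]) (ha : ∀ i, (a i).degree < n) (t : RatFunc (RatFunc k)) :
    ∃ η : Fin (n + 1) → RatFunc k,
      (∃ i, η i ≠ 0) ∧ ∑ i, ratToF (η i) * (kyToF (a i) / t) = 0 := by
  obtain ⟨η, hη, hsum⟩ := exists_sum_smul_eq_zero_of_degree_lt a ha
  refine ⟨η, hη, ?_⟩
  calc ∑ i, ratToF (η i) * (kyToF (a i) / t) = kyToF (∑ i, η i • a i) / t := by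
        simp only [map_sum, sum_div, smul_eq_C_mul, map_mul, mul_div_assoc]
        rfl
    _ = 0 := by rw [hsum, map_zero, zero_div]

theorem stmt_7_general {k : Type*} [Field k] [CharZero k]
    (P Q : Polynomial (Polynomial k))
    (hQ : Q ≠ 0)
    (m : ℕ) (q : Polynomial k) (Qi : ℕ → Polynomial (Polynomial k))
    (hfac : Q = Polynomial.C q * ∏ i ∈ Finset.range m, Qi i ^ (i + 1))
    (hQiprim : ∀ i < m, (Qi i).IsPrimitive)
    (hQisqf : ∀ i < m, Squarefree (Qi i))
    (hQicop : ∀ i < m, ∀ j < m, i ≠ j → IsRelPrime (Qi i) (Qi j))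
    (Qs : Polynomial (Polynomial k))
    (hQs : Qs = ∏ i ∈ Finset.range m, Qi i)
    (Dy : RatFunc (RatFunc k) → RatFunc (RatFunc k)) (hDy : IsDeriv Dy)
    (hDyval : ∀ A : Polynomial (RatFunc k), Dy (kyToF A) = kyToF (Polynomial.derivative A))
    (Dx : RatFunc (RatFunc k) → RatFunc (RatFunc k)) (hDx : IsDeriv Dx)
    (hDxval : ∀ A : Polynomial (Polynomial k), Dx (toF A) = toF (derivX A)) :
    (∀ i : ℕ, ∃ (g : RatFunc (RatFunc k)) (a : Polynomial (RatFunc k)),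
      a.degree < (Qs.natDegree : WithBot ℕ) ∧
      Dx^[i] (toF P / toF Q) = Dy g + kyToF a / toF Qs) ∧
    (∀ (g : ℕ → RatFunc (RatFunc k)) (a : ℕ → Polynomial (RatFunc k)),
      (∀ i ≤ Qs.natDegree, (a i).degree < (Qs.natDegree : WithBot ℕ) ∧
        Dx^[i] (toF P / toF Q) = Dy (g i) + kyToF (a i) / toF Qs) →
      ∃ η : Fin (Qs.natDegree + 1) → RatFunc k, (∃ i, η i ≠ 0) ∧
        ∑ i : Fin (Qs.natDegree + 1), ratToF (η i) * (kyToF (a (i : ℕ)) / toF Qs) = 0) := by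
  classical
  have hS : (toKy Qs).Separable := hQs ▸ separable_map_prod
    (fun i hi => hQiprim i (mem_range.mp hi)) (fun i hi => hQisqf i (mem_range.mp hi))
    (fun i hi j hj hij => hQicop i (mem_range.mp hi) j (mem_range.mp hj) hij)
  have hS0 : toF Qs ≠ 0 := (map_ne_zero_iff kyToF
    (IsFractionRing.injective (RatFunc k)[X] (RatFunc (RatFunc k)))).mpr hS.ne_zero
  have hq : IsUnit (algebraMap (Polynomial k) (RatFunc k) q) := by
    refine (IsUnit.mk0 _ ((map_ne_zero_iff _ (IsFractionRing.injective _ _)).mpr ?_))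
    rintro rfl
    simp [hfac] at hQ
  obtain ⟨R, hR⟩ : toKy Q ∣ toKy Qs ^ m :=
    hfac ▸ hQs ▸ map_C_mul_prod_pow_succ_dvd _ hq Qi m
  have hQR : toF Q * kyToF R = toF Qs ^ m := by
    change kyToF (toKy Q) * kyToF R = kyToF (toKy Qs) ^ m
    rw [← map_mul, ← hR, map_pow]
  have hSdeg : (toKy Qs).natDegree = Qs.natDegree :=
    natDegree_map_eq_of_injective (IsFractionRing.injective _ _) Qs
  refine ⟨fun i => ?_, fun g a ha => ?_⟩
  · obtain ⟨N, e, hN⟩ := hDx.exists_iterate_div_eq toF derivX hDxval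
      ((map_ne_zero_iff _ toF_injective).mpr hQ) P i
    obtain ⟨g, a, ha, hg⟩ := exists_div_pow_eq_deriv_add_div kyToF hDy hDyval hS hS0 (m * e)
      (toKy N * R ^ e)
    refine ⟨g, a, hSdeg ▸ ha, ?_⟩
    rw [map_mul, map_pow] at hg
    rw [hN, div_pow_eq_mul_pow_div_pow_of_mul_eq_pow hQR hS0]
    exact hg
  · exact exists_sum_ratToF_mul_div_eq_zero (fun i => a i)
      (fun i => (ha i (Nat.lt_succ_iff.mp i.2)).1) (toF Qs)

/-- Lemma `le:bound`. Under Hypothesis (H), with `f = P/Q`: for every `i`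
there are `gᵢ ∈ k(x,y)` and `aᵢ ∈ k(x)[y]` with `deg_y(aᵢ) < d_y*` such that
`D_x^i(f) = D_y(gᵢ) + aᵢ/Q*`; and for any such choice, the `d_y* + 1` rational functions
`rᵢ = aᵢ/Q*`, `0 ≤ i ≤ d_y*`, are linearly dependent over `k(x)`. -/
theorem stmt_7 {k : Type*} [Field k] [CharZero k]
    (P Q : Polynomial (Polynomial k))
    (hP : P ≠ 0) (hQ : Q ≠ 0)
    (hPQdeg : P.degree < Q.degree)
    (hPQcop : IsRelPrime P Q)
    (hQprimY : Q.IsPrimitive)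
    (m : ℕ) (hm : 0 < m) (q : Polynomial k) (Qi : ℕ → Polynomial (Polynomial k))
    (hfac : Q = Polynomial.C q * ∏ i ∈ Finset.range m, Qi i ^ (i + 1))
    (hQiprim : ∀ i < m, (Qi i).IsPrimitive)
    (hQisqf : ∀ i < m, Squarefree (Qi i))
    (hQicop : ∀ i < m, ∀ j < m, i ≠ j → IsRelPrime (Qi i) (Qi j))
    (hQim : 0 < (Qi (m - 1)).natDegree)
    (Qs Qneg : Polynomial (Polynomial k))
    (hQs : Qs = ∏ i ∈ Finset.range m, Qi i)
    (hQneg : Q = Qs * Qneg)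
    (Dy : RatFunc (RatFunc k) → RatFunc (RatFunc k)) (hDy : IsDeriv Dy)
    (hDyval : ∀ A : Polynomial (RatFunc k), Dy (kyToF A) = kyToF (Polynomial.derivative A))
    (Dx : RatFunc (RatFunc k) → RatFunc (RatFunc k)) (hDx : IsDeriv Dx)
    (hDxval : ∀ A : Polynomial (Polynomial k), Dx (toF A) = toF (derivX A)) :
    (∀ i : ℕ, ∃ (g : RatFunc (RatFunc k)) (a : Polynomial (RatFunc k)),
      a.degree < (Qs.natDegree : WithBot ℕ) ∧
      Dx^[i] (toF P / toF Q) = Dy g + kyToF a / toF Qs) ∧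
    (∀ (g : ℕ → RatFunc (RatFunc k)) (a : ℕ → Polynomial (RatFunc k)),
      (∀ i ≤ Qs.natDegree, (a i).degree < (Qs.natDegree : WithBot ℕ) ∧
        Dx^[i] (toF P / toF Q) = Dy (g i) + kyToF (a i) / toF Qs) →
      ∃ η : Fin (Qs.natDegree + 1) → RatFunc k, (∃ i, η i ≠ 0) ∧
        ∑ i : Fin (Qs.natDegree + 1), ratToF (η i) * (kyToF (a (i : ℕ)) / toF Qs) = 0) :=
  stmt_7_general P Q hQ m q Qi hfac hQiprim hQisqf hQicop Qs hQs Dy hDy hDyval Dx hDx hDxval
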